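/- For all n ≥ 0, the coefficient c_n = -1/(n+1) + ∑_{k=0}^{n} 1/((2n-2k+1)(k+1)(2k+1)) is ≤ 0; equivalently c_n = (2/((n+1)(2n+3)))·((n+2)∑_{k=1}^n 1/(2k+1) - (n+1)∑_{k=1}^n 1/(2k)) for n > 1. -/

import Mathlib

/-! Partial fractions split each summand of `ccoef n` into multiples of `1 / (2(n-k)+1)`,
`1 / (k+1)` and `1 / (2k+1)`; after reflecting the first sum, `ccoef n` is the stated combination
of `O n = ∑ 1/(2k+1)` and `E n = ∑ 1/(2k)`. Its sign is that of `D n = (n+1) E n - (n+2) O n`,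
and `D (n+1) - D n = (E n - O n) - n / ((2n+2)(2n+3)) ≥ 0`, the last bound because each step of
`E - O` adds `1 / ((2n+2)(2n+3))`, more than the bound grows. Hence `D n ≥ D 0 = 0`. -/

noncomputable def ccoef (n : ℕ) : ℝ :=
  -(1 / ((n : ℝ) + 1)) +
    ∑ k ∈ Finset.range (n + 1),
      1 / ((2 * (n : ℝ) - 2 * (k : ℝ) + 1) * ((k : ℝ) + 1) * (2 * (k : ℝ) + 1))

open Finset

noncomputable def oddRecipSum (n : ℕ) : ℝ := ∑ k ∈ Icc 1 n, (1 : ℝ) / (2 * k + 1)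

noncomputable def evenRecipSum (n : ℕ) : ℝ := ∑ k ∈ Icc 1 n, (1 : ℝ) / (2 * k)

lemma oddRecipSum_succ (n : ℕ) :
    oddRecipSum (n + 1) = oddRecipSum n + 1 / (2 * ((n : ℝ) + 1) + 1) := by
  rw [oddRecipSum, oddRecipSum, sum_Icc_succ_top (by omega)]
  push_cast
  ring

lemma evenRecipSum_succ (n : ℕ) :
    evenRecipSum (n + 1) = evenRecipSum n + 1 / (2 * ((n : ℝ) + 1)) := by
  rw [evenRecipSum, evenRecipSum, sum_Icc_succ_top (by omega)]
  push_cast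
  ring

lemma sum_range_succ_inv_two_mul_add_one (n : ℕ) :
    ∑ k ∈ range (n + 1), (1 : ℝ) / (2 * k + 1) = 1 + oddRecipSum n := by
  induction n with
  | zero => simp [oddRecipSum]
  | succ n ih =>
    rw [sum_range_succ, ih, oddRecipSum_succ]
    push_cast
    ring

lemma sum_range_succ_inv_add_one (n : ℕ) :
    ∑ k ∈ range (n + 1), (1 : ℝ) / (k + 1) = 2 * evenRecipSum n + 1 / ((n : ℝ) + 1) := by
  induction n with
  | zero => simp [evenRecipSum]
  | succ n ih =>
    rw [sum_range_succ, ih, evenRecipSum_succ]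
    push_cast
    field_simp

lemma one_div_mul_mul_eq_partialFractions {x y : ℝ} (hy : 0 ≤ y) (hyx : y ≤ x) :
    1 / ((2 * x - 2 * y + 1) * (y + 1) * (2 * y + 1)) =
      1 / ((x + 1) * (2 * x + 3) * (2 * (x - y) + 1)) - 1 / ((2 * x + 3) * (y + 1)) +
        1 / ((x + 1) * (2 * y + 1)) := by
  have h₁ : 2 * x - 2 * y + 1 ≠ 0 := by linarith
  have h₂ : 2 * (x - y) + 1 ≠ 0 := by linarith
  have h₃ : y + 1 ≠ 0 := by linarith
  have h₄ : 2 * y + 1 ≠ 0 := by linarith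
  have h₅ : x + 1 ≠ 0 := by linarith
  have h₆ : 2 * x + 3 ≠ 0 := by linarith
  field_simp
  ring

lemma ccoef_eq (n : ℕ) :
    ccoef n = 2 / (((n : ℝ) + 1) * (2 * (n : ℝ) + 3)) *
      (((n : ℝ) + 2) * oddRecipSum n - ((n : ℝ) + 1) * evenRecipSum n) := by
  have hsplit : ∀ k ∈ range (n + 1),
      1 / ((2 * (n : ℝ) - 2 * (k : ℝ) + 1) * ((k : ℝ) + 1) * (2 * (k : ℝ) + 1)) =
        1 / (((n : ℝ) + 1) * (2 * (n : ℝ) + 3)) * (1 / (2 * ((n - k : ℕ) : ℝ) + 1)) -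
          1 / (2 * (n : ℝ) + 3) * (1 / ((k : ℝ) + 1)) +
            1 / ((n : ℝ) + 1) * (1 / (2 * (k : ℝ) + 1)) := by
    intro k hk
    have hkn : k ≤ n := Nat.lt_succ_iff.mp (mem_range.mp hk)
    rw [Nat.cast_sub hkn, one_div_mul_mul_eq_partialFractions k.cast_nonneg (by exact_mod_cast hkn)]
    simp only [one_div_mul_one_div]
  have hreflect : ∑ k ∈ range (n + 1), (1 : ℝ) / (2 * ((n - k : ℕ) : ℝ) + 1) =
      ∑ k ∈ range (n + 1), (1 : ℝ) / (2 * (k : ℝ) + 1) :=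
    sum_range_reflect (fun j => (1 : ℝ) / (2 * (j : ℝ) + 1)) (n + 1)
  rw [ccoef, sum_congr rfl hsplit, sum_add_distrib, sum_sub_distrib, ← mul_sum, ← mul_sum,
    ← mul_sum, hreflect, sum_range_succ_inv_two_mul_add_one, sum_range_succ_inv_add_one]
  field_simp
  ring

lemma le_evenRecipSum_sub_oddRecipSum (n : ℕ) :
    (n : ℝ) / ((2 * n + 2) * (2 * n + 3)) ≤ evenRecipSum n - oddRecipSum n := by
  induction n with
  | zero => simp [evenRecipSum, oddRecipSum]
  | succ n ih =>
    have hterm : 1 / (2 * ((n : ℝ) + 1)) - 1 / (2 * ((n : ℝ) + 1) + 1) =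
        1 / ((2 * n + 2) * (2 * n + 3)) := by
      field_simp
      ring
    have hdecay : ((n : ℝ) + 1) / ((2 * ((n : ℝ) + 1) + 2) * (2 * ((n : ℝ) + 1) + 3)) ≤
        (n : ℝ) / ((2 * n + 2) * (2 * n + 3)) + 1 / ((2 * n + 2) * (2 * n + 3)) := by
      rw [← add_div]
      gcongr <;> linarith
    rw [evenRecipSum_succ, oddRecipSum_succ]
    push_cast
    linarith

lemma add_two_mul_oddRecipSum_le (n : ℕ) :
    ((n : ℝ) + 2) * oddRecipSum n ≤ ((n : ℝ) + 1) * evenRecipSum n := by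
  induction n with
  | zero => simp [evenRecipSum, oddRecipSum]
  | succ n ih =>
    have hstep : ((n : ℝ) + 1 + 1) * (evenRecipSum n + 1 / (2 * ((n : ℝ) + 1))) -
        ((n : ℝ) + 1 + 2) * (oddRecipSum n + 1 / (2 * ((n : ℝ) + 1) + 1)) =
          (((n : ℝ) + 1) * evenRecipSum n - ((n : ℝ) + 2) * oddRecipSum n) +
            (evenRecipSum n - oddRecipSum n - (n : ℝ) / ((2 * n + 2) * (2 * n + 3))) := by
      field_simp
      ring
    rw [evenRecipSum_succ, oddRecipSum_succ]
    push_cast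
    linarith [le_evenRecipSum_sub_oddRecipSum n]

theorem stmt13 (n : ℕ) :
    ccoef n ≤ 0 ∧
    (1 < n →
      ccoef n =
        (2 / (((n : ℝ) + 1) * (2 * (n : ℝ) + 3))) *
          (((n : ℝ) + 2) * ∑ k ∈ Finset.Icc 1 n, (1 : ℝ) / (2 * k + 1) -
            ((n : ℝ) + 1) * ∑ k ∈ Finset.Icc 1 n, (1 : ℝ) / (2 * k))) := by
  refine ⟨?_, fun _ => ccoef_eq n⟩
  rw [ccoef_eq n]
  exact mul_nonpos_of_nonneg_of_nonpos (by positivity)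
    (sub_nonpos.mpr (add_two_mul_oddRecipSum_le n))
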